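/- Let T ≥ 3, λ > 0, G > 0, c ≥ 0, let w_1 ∈ 𝒟 and g_1, …, g_{T−1} ∈ ℝ^d with ‖g_t‖ ≤ G, and define iterates by w_{t+1} = Π(w_t − η_t·g_t) with time-varying step sizes η_t = 1/(λ(t + c)). Then the total continuous switching cost satisfies Σ_{t=2}^T ‖w_t − w_{t−1}‖ ≤ (2G/λ)·log(T/(1 + c) + 1). -/

import Mathlib

/-!
The projection onto the ball does not increase the distance to any point of the ball, and all
iterates lie in the ball, so the `t`-th move has length at most `η_t ‖g_t‖ ≤ G / (λ (t + c))`.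
Since `x = t + c ≥ 1`, each term of the resulting harmonic-type sum satisfies
`1 / x ≤ 2 / (x + 1) ≤ 2 (log (x + 1) - log x)`, and these bounds telescope.
-/

open scoped InnerProductSpace BigOperators

/-- Euclidean projection onto the ball `{w : ‖w‖ ≤ D/2}` in `ℝ^d`. -/
noncomputable def ballProj (d : ℕ) (D : ℝ) (p : EuclideanSpace ℝ (Fin d)) :
    EuclideanSpace ℝ (Fin d) :=
  if ‖p‖ ≤ D / 2 then p else (D / (2 * ‖p‖)) • p

open Finset Real

/-- The key estimate is `‖p - q‖² - ‖s • p - q‖² ≥ (1 - s)² ‖p‖²`. -/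
theorem norm_smul_sub_le_norm_sub {E : Type*} [NormedAddCommGroup E] [InnerProductSpace ℝ E]
    {p q : E} {s : ℝ} (hs₀ : 0 ≤ s) (hs₁ : s ≤ 1) (hq : ‖q‖ ≤ s * ‖p‖) :
    ‖s • p - q‖ ≤ ‖p - q‖ := by
  have hinner : ⟪p, q⟫_ℝ ≤ ‖p‖ * ‖q‖ := real_inner_le_norm p q
  have hsq : ‖s • p - q‖ ^ 2 ≤ ‖p - q‖ ^ 2 := by
    rw [norm_sub_sq_real, norm_sub_sq_real, real_inner_smul_left, norm_smul, norm_of_nonneg hs₀]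
    nlinarith [mul_le_mul_of_nonneg_left hq (norm_nonneg p), mul_nonneg (sub_nonneg.2 hs₁)
      (sq_nonneg ‖p‖), mul_nonneg (sub_nonneg.2 hs₁) (sub_nonneg.2 hinner)]
  exact pow_le_pow_iff_left₀ (norm_nonneg _) (norm_nonneg _) two_ne_zero |>.1 hsq

section ballProj

variable {d : ℕ} {D : ℝ}

theorem norm_ballProj_le (hD : 0 ≤ D) (p : EuclideanSpace ℝ (Fin d)) :
    ‖ballProj d D p‖ ≤ D / 2 := by
  unfold ballProj
  split_ifs with h
  · exact h
  · have hp : 0 < ‖p‖ := by linarith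
    rw [norm_smul, norm_of_nonneg (by positivity)]
    exact le_of_eq (by field_simp)

theorem norm_ballProj_sub_le (p : EuclideanSpace ℝ (Fin d)) {q : EuclideanSpace ℝ (Fin d)}
    (hq : ‖q‖ ≤ D / 2) : ‖ballProj d D p - q‖ ≤ ‖p - q‖ := by
  unfold ballProj
  split_ifs with h
  · exact le_rfl
  · have hp : 0 < ‖p‖ := (norm_nonneg q).trans_lt (hq.trans_lt (not_le.1 h))
    have hscale : D / (2 * ‖p‖) * ‖p‖ = D / 2 := by field_simp
    refine norm_smul_sub_le_norm_sub ?_ ?_ (hscale ▸ hq)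
    · exact div_nonneg (by linarith [norm_nonneg q]) (by positivity)
    · rw [div_le_one (by positivity)]
      linarith

theorem norm_ballProj_sub_smul_sub_le {w g : EuclideanSpace ℝ (Fin d)} {η G : ℝ}
    (hw : ‖w‖ ≤ D / 2) (hη : 0 ≤ η) (hg : ‖g‖ ≤ G) :
    ‖ballProj d D (w - η • g) - w‖ ≤ η * G :=
  calc ‖ballProj d D (w - η • g) - w‖ ≤ ‖(w - η • g) - w‖ := norm_ballProj_sub_le _ hw
    _ = η * ‖g‖ := by rw [sub_sub_cancel_left, norm_neg, norm_smul, norm_of_nonneg hη]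
    _ ≤ η * G := by gcongr

theorem norm_le_of_eq_ballProj (hD : 0 ≤ D) {w : ℕ → EuclideanSpace ℝ (Fin d)} {n : ℕ}
    (p : ℕ → EuclideanSpace ℝ (Fin d)) (hw₁ : ‖w 1‖ ≤ D / 2)
    (hw : ∀ t ∈ Icc 1 n, w (t + 1) = ballProj d D (p t)) :
    ∀ t ∈ Icc 1 (n + 1), ‖w t‖ ≤ D / 2 := by
  intro t ht
  obtain ⟨ht₁, htn⟩ := mem_Icc.1 ht
  rcases ht₁.eq_or_lt with rfl | ht₂
  · exact hw₁
  · obtain ⟨s, rfl⟩ := Nat.exists_eq_add_one_of_ne_zero (by omega : t ≠ 0)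
    rw [hw s (mem_Icc.2 ⟨by omega, by omega⟩)]
    exact norm_ballProj_le hD _

end ballProj

theorem inv_le_two_mul_log_add_one_sub_log {x : ℝ} (hx : 1 ≤ x) :
    x⁻¹ ≤ 2 * (log (x + 1) - log x) := by
  have hx₀ : 0 < x := by linarith
  have hlog : 1 - ((x + 1) / x)⁻¹ ≤ log ((x + 1) / x) := one_sub_inv_le_log_of_pos (by positivity)
  rw [log_div (by positivity) hx₀.ne', inv_div] at hlog
  have hinv : x⁻¹ ≤ 2 * (1 - x / (x + 1)) := by
    rw [one_sub_div (by positivity), add_sub_cancel_left, inv_le_comm₀ hx₀ (by positivity)]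
    field_simp
    linarith
  linarith

theorem sum_Icc_inv_add_le_two_mul_log {c : ℝ} (hc : 0 ≤ c) (n : ℕ) :
    ∑ t ∈ Icc 1 n, ((t : ℝ) + c)⁻¹ ≤ 2 * (log (n + 1 + c) - log (1 + c)) := by
  induction n with
  | zero => simp
  | succ n ih =>
    rw [sum_Icc_succ_top (by omega)]
    have hstep := inv_le_two_mul_log_add_one_sub_log (x := (n : ℝ) + 1 + c)
      (by linarith [n.cast_nonneg (α := ℝ)])
    rw [add_right_comm _ c 1] at hstep
    push_cast
    linarith

theorem sum_Icc_two_eq_sum_Icc_one_add_one {M : Type*} [AddCommMonoid M] (f : ℕ → M) (n : ℕ) :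
    ∑ t ∈ Icc 2 n, f t = ∑ t ∈ Icc 1 (n - 1), f (t + 1) := by
  have hshift : Icc 2 n = (Icc 1 (n - 1)).map (addRightEmbedding 1) := by
    ext t
    simp only [mem_Icc, mem_map, addRightEmbedding_apply]
    exact ⟨fun h => ⟨t - 1, by omega, by omega⟩, by rintro ⟨s, hs, rfl⟩; omega⟩
  rw [hshift, sum_map]
  rfl

theorem stmt14_general (d T : ℕ) (D G lam c : ℝ) (hlam : 0 < lam)
    (hG : 0 < G) (hc : 0 ≤ c)
    (w g : ℕ → EuclideanSpace ℝ (Fin d))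
    (hw1 : w 1 ∈ Metric.closedBall (0 : EuclideanSpace ℝ (Fin d)) (D / 2))
    (hg : ∀ t ∈ Finset.Icc 1 (T - 1), ‖g t‖ ≤ G)
    (hupd : ∀ t ∈ Finset.Icc 1 (T - 1),
      w (t + 1) = ballProj d D (w t - (1 / (lam * ((t : ℝ) + c))) • g t)) :
    ∑ t ∈ Finset.Icc 2 T, ‖w t - w (t - 1)‖ ≤
      (2 * G / lam) * Real.log ((T : ℝ) / (1 + c) + 1) := by
  rw [mem_closedBall_zero_iff] at hw1
  have hD : 0 ≤ D := by linarith [norm_nonneg (w 1)]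
  have hball := norm_le_of_eq_ballProj hD _ hw1 hupd
  have hmove : ∀ t ∈ Icc 1 (T - 1), ‖w (t + 1) - w t‖ ≤ G / lam * ((t : ℝ) + c)⁻¹ := by
    intro t ht
    obtain ⟨ht₁, htT⟩ := mem_Icc.1 ht
    have htc : 0 < (t : ℝ) + c := by linarith [(Nat.one_le_cast (α := ℝ)).2 ht₁]
    rw [hupd t ht]
    calc _ ≤ 1 / (lam * ((t : ℝ) + c)) * G := norm_ballProj_sub_smul_sub_le
          (hball t (mem_Icc.2 ⟨ht₁, by omega⟩)) (by positivity) (hg t ht)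
      _ = G / lam * ((t : ℝ) + c)⁻¹ := by field_simp
  have hlast : ((T - 1 : ℕ) : ℝ) + 1 + c ≤ (T / (1 + c) + 1) * (1 + c) := by
    rw [add_mul, div_mul_cancel₀ _ (by linarith)]
    linarith [Nat.cast_le (α := ℝ).2 (Nat.sub_le T 1)]
  calc ∑ t ∈ Icc 2 T, ‖w t - w (t - 1)‖
      = ∑ t ∈ Icc 1 (T - 1), ‖w (t + 1) - w t‖ := sum_Icc_two_eq_sum_Icc_one_add_one _ T
    _ ≤ G / lam * ∑ t ∈ Icc 1 (T - 1), ((t : ℝ) + c)⁻¹ := by rw [mul_sum]; exact sum_le_sum hmove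
    _ ≤ G / lam * (2 * (log ((T - 1 : ℕ) + 1 + c) - log (1 + c))) := by
        gcongr; exact sum_Icc_inv_add_le_two_mul_log hc _
    _ = G / lam * (2 * log (((T - 1 : ℕ) + 1 + c) / (1 + c))) := by
        rw [log_div (by positivity) (by positivity)]
    _ ≤ G / lam * (2 * log (T / (1 + c) + 1)) := by
        gcongr
        rwa [div_le_iff₀ (by linarith)]
    _ = 2 * G / lam * log (T / (1 + c) + 1) := by ring

/-- If `w 1 ∈ 𝒟` and `w (t+1) = Π(w t − η_t • g t)` with `‖g t‖ ≤ G` and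
time-varying step sizes `η_t = 1/(λ(t + c))`, then the total continuous switching cost satisfies
`∑_{t=2}^T ‖w t − w (t−1)‖ ≤ (2G/λ)·log (T/(1 + c) + 1)`. -/
theorem stmt14 (d T : ℕ) (hT : 3 ≤ T) (D G lam c : ℝ) (hD : 0 < D) (hlam : 0 < lam)
    (hG : 0 < G) (hc : 0 ≤ c)
    (w g : ℕ → EuclideanSpace ℝ (Fin d))
    (hw1 : w 1 ∈ Metric.closedBall (0 : EuclideanSpace ℝ (Fin d)) (D / 2))
    (hg : ∀ t ∈ Finset.Icc 1 (T - 1), ‖g t‖ ≤ G)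
    (hupd : ∀ t ∈ Finset.Icc 1 (T - 1),
      w (t + 1) = ballProj d D (w t - (1 / (lam * ((t : ℝ) + c))) • g t)) :
    ∑ t ∈ Finset.Icc 2 T, ‖w t - w (t - 1)‖ ≤
      (2 * G / lam) * Real.log ((T : ℝ) / (1 + c) + 1) :=
  stmt14_general d T D G lam c hlam hG hc w g hw1 hg hupd
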